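/- Let A be a σ-subnormal subgroup of a finite group G. If A is a σ_i-group (i.e., every prime dividing |A| lies in σ_i), then A ≤ O_{σ_i}(G); consequently, if A is σ-nilpotent then A ≤ F_σ(G). -/

import Mathlib

open Pointwise

section SigmaDefs

variable {ι : Type*}

/-- `σ` is a partition of the set of all primes into pairwise disjoint nonempty sets. -/
def IsPrimePartition (σ : ι → Set ℕ) : Prop :=
  (∀ i, ∀ p ∈ σ i, Nat.Prime p) ∧ (∀ i, (σ i).Nonempty) ∧
    (∀ i j, i ≠ j → Disjoint (σ i) (σ j)) ∧
    (∀ p : ℕ, Nat.Prime p → ∃ i, p ∈ σ i)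

/-- All primes dividing `n` lie in a single class `σ i`. -/
def IsSigmaPrimaryNat (σ : ι → Set ℕ) (n : ℕ) : Prop :=
  ∃ i, ∀ p : ℕ, Nat.Prime p → p ∣ n → p ∈ σ i

/-- A group is `σ`-primary if all primes dividing its order lie in a single class of `σ`. -/
def IsSigmaPrimary (σ : ι → Set ℕ) (G : Type*) [Group G] : Prop :=
  IsSigmaPrimaryNat σ (Nat.card G)

/-- A group is `σ`-nilpotent if it is the (internal) direct product of finitely many
normal `σ`-primary subgroups. -/
def SigmaNilpotent (σ : ι → Set ℕ) (G : Type*) [Group G] : Prop :=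
  ∃ (k : ℕ) (N : Fin k → Subgroup G),
    (∀ t, (N t).Normal) ∧ (∀ t, IsSigmaPrimary σ ↥(N t)) ∧
      (∀ t, Disjoint (N t) (⨆ s, ⨆ _ : s ≠ t, N s)) ∧ (⨆ t, N t) = ⊤

/-- `H/K` is a chief factor of `G`: both are normal in `G`, `K < H`, and no normal
subgroup of `G` lies strictly between them. -/
def IsChiefFactor (G : Type*) [Group G] (K H : Subgroup G) : Prop :=
  K.Normal ∧ H.Normal ∧ K < H ∧
    ∀ L : Subgroup G, L.Normal → K ≤ L → L ≤ H → L = K ∨ L = H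

/-- A group is `σ`-soluble if every chief factor is `σ`-primary
(the order of the factor `H/K` is `K.relindex H`). -/
def SigmaSoluble (σ : ι → Set ℕ) (G : Type*) [Group G] : Prop :=
  ∀ K H : Subgroup G, IsChiefFactor G K H → IsSigmaPrimaryNat σ (K.relIndex H)

/-- `A` is `σ`-subnormal in `G`: there is a chain `A = A₀ ≤ A₁ ≤ ⋯ ≤ A_t = G` such that
each `A_{j}` is normal in `A_{j+1}` or `A_{j+1}/(A_j)_{A_{j+1}}` is `σ`-primary. -/
def SigmaSubnormal (σ : ι → Set ℕ) {G : Type*} [Group G] (A : Subgroup G) : Prop :=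
  ∃ (t : ℕ) (f : Fin (t + 1) → Subgroup G),
    f 0 = A ∧ f (Fin.last t) = ⊤ ∧
      ∀ j : Fin t, f j.castSucc ≤ f j.succ ∧
        (((f j.castSucc).subgroupOf (f j.succ)).Normal ∨
          IsSigmaPrimaryNat σ (((f j.castSucc).subgroupOf (f j.succ)).normalCore.index))

/-- `M` is a maximal subgroup of `K` (inside the ambient group `G`). -/
def MaximalIn {G : Type*} [Group G] (M K : Subgroup G) : Prop :=
  M < K ∧ ∀ L : Subgroup G, M < L → L ≤ K → L = K

/-- `H` is an `n`-maximal subgroup of `G`: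
there is a chain `H = M_n < ⋯ < M_1 < M_0 = G` with each term maximal in the previous one. -/
def IsNMaximal {G : Type*} [Group G] : ℕ → Subgroup G → Prop
  | 0, H => H = ⊤
  | n + 1, H => ∃ K : Subgroup G, IsNMaximal n K ∧ MaximalIn H K

/-- `m_σ(G) = n`: every `n`-maximal subgroup of `G` is `σ`-subnormal in `G`, but
(when `n > 1`) some `(n-1)`-maximal subgroup is not `σ`-subnormal in `G`. -/
def mSigmaEq (σ : ι → Set ℕ) (G : Type*) [Group G] (n : ℕ) : Prop :=
  (∀ H : Subgroup G, IsNMaximal n H → SigmaSubnormal σ H) ∧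
    (1 < n → ∃ H : Subgroup G, IsNMaximal (n - 1) H ∧ ¬ SigmaSubnormal σ H)

/-- `H` is a Hall `σ i`-subgroup of `G`. -/
def IsHallSigmaSubgroup (σ : ι → Set ℕ) (i : ι) {G : Type*} [Group G] (H : Subgroup G) : Prop :=
  (∀ p : ℕ, Nat.Prime p → p ∣ Nat.card ↥H → p ∈ σ i) ∧
    (∀ p : ℕ, Nat.Prime p → p ∣ H.index → p ∉ σ i)

/-- A complete Hall `σ`-set of `G`: every nontrivial member is a Hall `σ i`-subgroup of `G`
for some `i`, and for every class `σ i` meeting `π(G)` the set contains exactly one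
Hall `σ i`-subgroup of `G`. -/
def IsCompleteHallSigmaSet (σ : ι → Set ℕ) {G : Type*} [Group G] (𝓗 : Set (Subgroup G)) : Prop :=
  (∀ H ∈ 𝓗, H ≠ ⊥ → ∃ i, IsHallSigmaSubgroup σ i H) ∧
    (∀ i : ι, (σ i ∩ {p : ℕ | Nat.Prime p ∧ p ∣ Nat.card G}).Nonempty →
      ∃! H : Subgroup G, H ∈ 𝓗 ∧ IsHallSigmaSubgroup σ i H)

/-- Two subgroups permute: `AB = BA` as subsets. -/
def PermutesWith {G : Type*} [Group G] (A B : Subgroup G) : Prop :=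
  (A : Set G) * (B : Set G) = (B : Set G) * (A : Set G)

/-- `H` is `σ`-quasinormal (`σ`-permutable) in `G`: `G` possesses a complete Hall `σ`-set `𝓗`
with `H Aˣ = Aˣ H` for all `A ∈ 𝓗` and all `x ∈ G`. -/
def SigmaQuasinormal (σ : ι → Set ℕ) {G : Type*} [Group G] (H : Subgroup G) : Prop :=
  ∃ 𝓗 : Set (Subgroup G), IsCompleteHallSigmaSet σ 𝓗 ∧
    ∀ A ∈ 𝓗, ∀ x : G, PermutesWith H (A.map (MulAut.conj x).toMonoidHom)

/-- `m_{σq}(G) = n`: every `n`-maximal subgroup of `G` is `σ`-quasinormal in `G`, but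
(when `n > 1`) some `(n-1)`-maximal subgroup is not `σ`-quasinormal in `G`. -/
def mSigmaQEq (σ : ι → Set ℕ) (G : Type*) [Group G] (n : ℕ) : Prop :=
  (∀ H : Subgroup G, IsNMaximal n H → SigmaQuasinormal σ H) ∧
    (1 < n → ∃ H : Subgroup G, IsNMaximal (n - 1) H ∧ ¬ SigmaQuasinormal σ H)

/-- The rank of the (soluble) group `G` is at most `m`: every chief factor of order `p ^ k`
has `k ≤ m`. -/
def RankLE (G : Type*) [Group G] (m : ℕ) : Prop :=
  ∀ K H : Subgroup G, IsChiefFactor G K H →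
    ∀ p k : ℕ, Nat.Prime p → K.relIndex H = p ^ k → k ≤ m

/-- `H` is S-quasinormal (S-permutable) in `G`: `H` permutes with every Sylow subgroup. -/
def SQuasinormal {G : Type*} [Group G] (H : Subgroup G) : Prop :=
  ∀ p : ℕ, Nat.Prime p → ∀ P : Sylow p G, PermutesWith H (P : Subgroup G)

/-- `A` is subnormal in `G`. -/
def IsSubnormalIn {G : Type*} [Group G] (A : Subgroup G) : Prop :=
  ∃ (t : ℕ) (f : Fin (t + 1) → Subgroup G),
    f 0 = A ∧ f (Fin.last t) = ⊤ ∧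
      ∀ j : Fin t, f j.castSucc ≤ f j.succ ∧ ((f j.castSucc).subgroupOf (f j.succ)).Normal

/-- A Schmidt group: not nilpotent, but all proper subgroups are nilpotent. -/
def IsSchmidt (G : Type*) [Group G] : Prop :=
  ¬ Group.IsNilpotent G ∧ ∀ H : Subgroup G, H ≠ ⊤ → Group.IsNilpotent ↥H

/-- A finite group is supersoluble if every chief factor has prime order. -/
def IsSupersoluble (G : Type*) [Group G] : Prop :=
  ∀ K H : Subgroup G, IsChiefFactor G K H → Nat.Prime (K.relIndex H)

/-- `l_σ(G) ≤ n`: `G` has a normal series of length `n` with `σ`-nilpotent factors. -/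
def SigmaNilpotentLengthLE (σ : ι → Set ℕ) (G : Type*) [Group G] (n : ℕ) : Prop :=
  ∃ f : Fin (n + 1) → Subgroup G,
    Monotone f ∧ f 0 = ⊥ ∧ f (Fin.last n) = ⊤ ∧ (∀ j, (f j).Normal) ∧
      ∀ (j : Fin n), ∀ [inst : (f j.castSucc).Normal],
        SigmaNilpotent σ ↥((f j.succ).map (QuotientGroup.mk' (f j.castSucc)))

/-- The `σ`-Fitting subgroup of `G`: the product (join) of all normal `σ`-nilpotent
subgroups of `G`. -/
def sigmaFitting (σ : ι → Set ℕ) (G : Type*) [Group G] : Subgroup G :=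
  ⨆ N ∈ {N : Subgroup G | N.Normal ∧ SigmaNilpotent σ ↥N}, N

/-- `F` is the `n`-th term `F_{nσ}(G)` of the upper `σ`-nilpotent series of `G`:
`F_{0σ}(G) = 1` and `F_{nσ}(G)/F_{(n-1)σ}(G) = F_σ(G/F_{(n-1)σ}(G))`. -/
def IsUpperSigmaNilpotentSeriesTerm (σ : ι → Set ℕ) (G : Type*) [Group G] :
    ℕ → Subgroup G → Prop
  | 0, F => F = ⊥
  | n + 1, F => ∃ F' : Subgroup G, IsUpperSigmaNilpotentSeriesTerm σ G n F' ∧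
      ∀ [inst : F'.Normal],
        F = Subgroup.comap (QuotientGroup.mk' F') (sigmaFitting σ (G ⧸ F'))

/-- `O_π(G)`: the largest normal subgroup of `G` whose order is a `π`-number
(here realised as the join of all normal `π`-subgroups). -/
def OPi (π : Set ℕ) (G : Type*) [Group G] : Subgroup G :=
  ⨆ N ∈ {N : Subgroup G | N.Normal ∧ ∀ p : ℕ, Nat.Prime p → p ∣ Nat.card ↥N → p ∈ π}, N

/-- `G` is `π`-closed: `O_π(G)` is a Hall `π`-subgroup of `G`, i.e. no prime in `π`
divides its index. -/
def PiClosed (π : Set ℕ) (G : Type*) [Group G] : Prop :=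
  ∀ p : ℕ, Nat.Prime p → p ∣ (OPi π G).index → p ∉ π

/-- The set of primes belonging to the classes of `σ` indexed by `S` (i.e. `∪ Π`). -/
def PiPrimes (σ : ι → Set ℕ) (S : Set ι) : Set ℕ := ⋃ i ∈ S, σ i

/-- `n` and `m` are `σ`-coprime: `σ(n) ∩ σ(m) = ∅`. -/
def SigmaCoprime (σ : ι → Set ℕ) (n m : ℕ) : Prop :=
  ∀ i : ι, ∀ p q : ℕ, Nat.Prime p → Nat.Prime q → p ∣ n → q ∣ m →
    p ∈ σ i → q ∈ σ i → False

/-- `D` is the `σ`-nilpotent residual `G^{𝔑_σ}` of `G`: the smallest normal subgroup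
with `σ`-nilpotent quotient. -/
def IsSigmaNilpotentResidual (σ : ι → Set ℕ) {G : Type*} [Group G] (D : Subgroup G) : Prop :=
  D.Normal ∧
    (∀ [inst : D.Normal], SigmaNilpotent σ (G ⧸ D)) ∧
    (∀ (N : Subgroup G) [inst : N.Normal], SigmaNilpotent σ (G ⧸ N) → D ≤ N)

/-- The chief factor `H/K` is `σ`-central in `G`: the semidirect product
`(H/K) ⋊ (G/C_G(H/K))` is `σ`-primary; since `σ`-primarity depends only on the order,
this is expressed via `|H/K| * |G/C_G(H/K)|`. -/
def SigmaCentralFactor (σ : ι → Set ℕ) {G : Type*} [Group G] (K H : Subgroup G)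
    [K.Normal] : Prop :=
  IsSigmaPrimaryNat σ
    (Nat.card ↥(H.map (QuotientGroup.mk' K)) *
      (Subgroup.centralizer ((H.map (QuotientGroup.mk' K) : Subgroup (G ⧸ K)) : Set (G ⧸ K))).index)

/-- `σ(G)`: the set of classes of `σ` meeting `π(G)`. -/
def sigmaOf (σ : ι → Set ℕ) (G : Type*) [Group G] : Set ι :=
  {i : ι | (σ i ∩ {p : ℕ | Nat.Prime p ∧ p ∣ Nat.card G}).Nonempty}

end SigmaDefs

/-!
Passing to `G ⧸ O_{σ_i}(G)` one may assume `O_{σ_i}(G) = 1`. Let `N` be a `σ_i`-subgroup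
normalised by `M`, where `G/D` is `σ`-primary for `D = M_G`. Then `N ∩ D` is a `σ_i`-subgroup
normal in the normal subgroup `D`, so it lies in `O_{σ_i}(G) = 1`; if `N ≤ D` we are done.
Otherwise `G/D` is a `σ_i`-group and `N` centralises `D`. In `C = C_G(D)` the central subgroup
`C ∩ D` has `σ_i`-index, and it is a `σ_i'`-group because each of its subgroups is normal in
`C` and `O_{σ_i}(C) ≤ O_{σ_i}(G) = 1`. By Schur–Zassenhaus it has a complement, which is normal
and a `σ_i`-group, hence trivial. So `C` is a `σ_i'`-group and `N = 1`.

It follows that `O_{σ_i}` of each term of a `σ`-subnormal chain lies in `O_{σ_i}` of the next.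
A `σ`-nilpotent `A` is generated by its `σ`-primary factors, each of which is normal in `A` and so
lies in some `O_{σ_i}(G) ≤ F_σ(G)`.
-/

open Subgroup

def IsPiNumber (π : Set ℕ) (n : ℕ) : Prop :=
  ∀ p : ℕ, p.Prime → p ∣ n → p ∈ π

namespace IsPiNumber

variable {π : Set ℕ} {m n : ℕ}

theorem of_dvd (hn : IsPiNumber π n) (hmn : m ∣ n) : IsPiNumber π m :=
  fun p hp hpm => hn p hp (hpm.trans hmn)

theorem mul (hm : IsPiNumber π m) (hn : IsPiNumber π n) : IsPiNumber π (m * n) := by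
  intro p hp hpmn
  rcases hp.dvd_mul.mp hpmn with h | h
  exacts [hm p hp h, hn p hp h]

theorem coprime (hm : IsPiNumber π m) (hn : IsPiNumber πᶜ n) : m.Coprime n :=
  Nat.coprime_of_dvd fun p hp hpm hpn => hn p hp hpn (hm p hp hpm)

theorem eq_one (hn : IsPiNumber π n) (hn' : IsPiNumber πᶜ n) : n = 1 :=
  (Nat.coprime_self n).mp (hn.coprime hn')

end IsPiNumber

theorem IsPrimePartition.isPiNumber_of_prime_dvd {ι : Type*} {σ : ι → Set ℕ}
    (hσ : IsPrimePartition σ) {n p : ℕ} {i : ι} (hn : IsSigmaPrimaryNat σ n) (hp : p.Prime)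
    (hpn : p ∣ n) (hpi : p ∈ σ i) :
    IsPiNumber (σ i) n := by
  obtain ⟨j, hj⟩ := hn
  obtain rfl : i = j := by
    by_contra hij
    exact Set.disjoint_left.mp (hσ.2.2.1 i j hij) hpi (hj p hp hpn)
  exact hj

section OPi

variable {G : Type*} [Group G] (π : Set ℕ)

theorem le_oPi {N : Subgroup G} (hN : N.Normal) (hNπ : IsPiNumber π (Nat.card N)) :
    N ≤ OPi π G :=
  le_iSup₂_of_le N ⟨hN, hNπ⟩ le_rfl

theorem isPiNumber_card_sup {N M : Subgroup G} [M.Normal] (hN : IsPiNumber π (Nat.card N))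
    (hM : IsPiNumber π (Nat.card M)) : IsPiNumber π (Nat.card ↥(N ⊔ M)) := by
  rw [← relIndex_bot_left, ← relIndex_mul_relIndex ⊥ M _ bot_le le_sup_right,
    relIndex_sup_right, relIndex_bot_left]
  exact hM.mul (hN.of_dvd (relIndex_dvd_card M N))

theorem isPiNumber_card_comap_mk' {K : Subgroup G} [K.Normal] {W : Subgroup (G ⧸ K)}
    (hK : IsPiNumber π (Nat.card K)) (hW : IsPiNumber π (Nat.card W)) :
    IsPiNumber π (Nat.card (W.comap (QuotientGroup.mk' K))) := by
  have := QuotientGroup.card_preimage_mk K W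
  exact this ▸ hK.mul hW

theorem le_normalizer_map_subtype {D : Subgroup G} (L : Subgroup D) [L.Normal] :
    D ≤ normalizer (L.map D.subtype : Set G) := by
  have := le_normalizer_map (H := L) D.subtype
  rwa [normalizer_eq_top, ← MonoidHom.range_eq_map, range_subtype] at this

theorem le_map_subtype_oPi {N D : Subgroup G} (hND : N ≤ D) (hDN : D ≤ normalizer (N : Set G))
    (hNπ : IsPiNumber π (Nat.card N)) : N ≤ (OPi π D).map D.subtype := by
  have hN : (N.subgroupOf D).Normal := (normal_subgroupOf_iff_le_normalizer hND).mpr hDN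
  have := map_mono (f := D.subtype)
    (le_oPi π hN (hNπ.of_dvd (card_comap_dvd_of_injective N D.subtype D.subtype_injective)))
  rwa [subgroupOf_map_subtype, inf_eq_left.mpr hND] at this

variable [Finite G]

theorem oPi_mem_normal_pi_subgroups :
    OPi π G ∈ {N : Subgroup G | N.Normal ∧ IsPiNumber π (Nat.card N)} := by
  rw [OPi, ← sSup_eq_iSup]
  refine SupClosed.sSup_mem ?_ (Set.toFinite _) ⟨inferInstance, ?_⟩ subset_rfl
  · rintro N ⟨hN, hNπ⟩ M ⟨hM, hMπ⟩
    exact ⟨sup_normal N M, isPiNumber_card_sup π hNπ hMπ⟩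
  · intro p hp hdvd
    rw [card_bot, Nat.dvd_one] at hdvd
    exact absurd hdvd hp.ne_one

instance oPi_normal : (OPi π G).Normal := (oPi_mem_normal_pi_subgroups π).1

theorem isPiNumber_card_oPi : IsPiNumber π (Nat.card (OPi π G)) :=
  (oPi_mem_normal_pi_subgroups π).2

instance oPi_characteristic : (OPi π G).Characteristic :=
  characteristic_iff_map_le.mpr fun ϕ =>
    le_oPi π ((oPi_normal π).map _ ϕ.surjective)
      ((isPiNumber_card_oPi π).of_dvd (card_map_dvd _ _))

theorem map_subtype_oPi_le_oPi (D : Subgroup G) [D.Normal] :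
    (OPi π D).map D.subtype ≤ OPi π G :=
  le_oPi π inferInstance ((isPiNumber_card_oPi π).of_dvd (card_map_dvd _ _))

theorem le_oPi_of_le_normalizer {N D : Subgroup G} [D.Normal] (hND : N ≤ D)
    (hDN : D ≤ normalizer (N : Set G)) (hNπ : IsPiNumber π (Nat.card N)) : N ≤ OPi π G :=
  (le_map_subtype_oPi π hND hDN hNπ).trans (map_subtype_oPi_le_oPi π D)

theorem oPi_quotient_oPi_eq_bot : OPi π (G ⧸ OPi π G) = ⊥ := by
  have h : (OPi π (G ⧸ OPi π G)).comap (QuotientGroup.mk' _) ≤ OPi π G :=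
    le_oPi π ((oPi_normal π).comap _)
      (isPiNumber_card_comap_mk' π (isPiNumber_card_oPi π) (isPiNumber_card_oPi π))
  have h' := (Subgroup.map_eq_bot_iff _).mpr (h.trans (QuotientGroup.ker_mk' (OPi π G)).ge)
  rwa [map_comap_eq_self_of_surjective (QuotientGroup.mk'_surjective _)] at h'

end OPi

section Central

variable {G : Type*} [Group G] (π : Set ℕ)

theorem normal_of_le_center {Z : Subgroup G} (hZ : Z ≤ center G) : Z.Normal :=
  ⟨fun z hz g => by rwa [mem_center_iff.mp (hZ hz) g, mul_inv_cancel_right]⟩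

theorem le_centralizer_of_inf_eq_bot {N D : Subgroup G} (hDN : D ≤ normalizer (N : Set G))
    (hND : N ≤ normalizer (D : Set G)) (h : N ⊓ D = ⊥) : N ≤ centralizer (D : Set G) := by
  intro n hn
  rw [mem_centralizer_iff]
  intro d hd
  have hcomm : n * d * n⁻¹ * d⁻¹ ∈ N ⊓ D := by
    refine ⟨?_, mul_mem ((mem_normalizer_iff.mp (hND hn) d).mp hd) (D.inv_mem hd)⟩
    rw [mul_assoc, mul_assoc, ← mul_assoc d]
    exact mul_mem hn ((mem_normalizer_iff.mp (hDN hd) n⁻¹).mp (inv_mem hn))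
  rw [h, mem_bot, mul_inv_eq_one, mul_inv_eq_iff_eq_mul] at hcomm
  exact hcomm.symm

variable [Finite G]

theorem isPiNumber_compl_card_of_le_center {Z : Subgroup G} (hZ : Z ≤ center G)
    (hO : OPi π G = ⊥) : IsPiNumber πᶜ (Nat.card Z) := by
  intro p hp hpZ hpπ
  have := Fact.mk hp
  obtain ⟨z, hz⟩ := exists_prime_orderOf_dvd_card' p hpZ
  have hzc : zpowers (z : G) ≤ center G := (zpowers_le.mpr z.2).trans hZ
  have hcard : Nat.card (zpowers (z : G)) = p := by rw [Nat.card_zpowers, orderOf_coe, hz]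
  have hbot : zpowers (z : G) = ⊥ :=
    le_bot_iff.mp (hO ▸ le_oPi π (normal_of_le_center hzc) (hcard ▸ fun q hq hqp =>
      (Nat.prime_dvd_prime_iff_eq hq hp).mp hqp ▸ hpπ))
  rw [← card_eq_one, hcard] at hbot
  exact hp.ne_one hbot

theorem isPiNumber_compl_card_of_le_center_of_index {Z : Subgroup G} (hZ : Z ≤ center G)
    (hidx : IsPiNumber π Z.index) (hO : OPi π G = ⊥) : IsPiNumber πᶜ (Nat.card G) := by
  have hZπ := isPiNumber_compl_card_of_le_center π hZ hO
  have := normal_of_le_center hZ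
  obtain ⟨H, hH⟩ := exists_right_complement'_of_coprime (hidx.coprime hZπ).symm
  -- a complement of a central subgroup is normal, and here it is a `π`-group
  have hHn : H.Normal := normalizer_eq_top_iff.mp <| top_le_iff.mp <|
    hH.sup_eq_top ▸ sup_le (hZ.trans (center_le_normalizer _)) le_normalizer
  have hHbot : H = ⊥ :=
    le_bot_iff.mp (hO ▸ le_oPi π hHn (hH.symm.index_eq_card ▸ hidx))
  rw [hHbot, isComplement'_bot_right] at hH
  rw [← card_top (G := G), ← hH]
  exact hZπ

theorem eq_bot_of_le_centralizer {D N : Subgroup G} [D.Normal] (hD : IsPiNumber π D.index)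
    (hO : OPi π G = ⊥) (hN : N ≤ centralizer (D : Set G)) (hNπ : IsPiNumber π (Nat.card N)) :
    N = ⊥ := by
  set C := centralizer (D : Set G)
  have hOC : OPi π C = ⊥ := (map_eq_bot_iff_of_injective _ C.subtype_injective).mp
    (le_bot_iff.mp (hO ▸ map_subtype_oPi_le_oPi π C))
  have hZ : D.subgroupOf C ≤ center C := fun z hz => mem_center_iff.mpr fun c =>
    Subtype.ext (mem_centralizer_iff.mp c.2 z (mem_subgroupOf.mp hz)).symm
  have hC := isPiNumber_compl_card_of_le_center_of_index π hZ
    (hD.of_dvd (relIndex_dvd_index_of_normal D C)) hOC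
  rw [← card_eq_one]
  exact hNπ.eq_one (hC.of_dvd (card_dvd_of_le hN))

end Central

theorem index_normalCore_map_dvd {G G' : Type*} [Group G] [Group G'] {f : G →* G'}
    (hf : Function.Surjective f) (M : Subgroup G) :
    (M.map f).normalCore.index ∣ M.normalCore.index := by
  have := (normalCore_normal M).map f hf
  exact (index_dvd_of_le (normal_le_normalCore.mpr (map_mono (normalCore_le M)))).trans
    (index_map_dvd _ hf)

theorem IsSigmaPrimaryNat.of_dvd {ι : Type*} {σ : ι → Set ℕ} {m n : ℕ}
    (hn : IsSigmaPrimaryNat σ n) (hmn : m ∣ n) : IsSigmaPrimaryNat σ m :=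
  hn.imp fun _ hi => IsPiNumber.of_dvd hi hmn

section SigmaSubnormal

variable {ι : Type*} {σ : ι → Set ℕ} {i : ι} {G : Type*} [Group G]

theorem isPiNumber_index_of_not_le (hσ : IsPrimePartition σ) {D N : Subgroup G} [D.Normal]
    (hD : IsSigmaPrimaryNat σ D.index) (hNπ : IsPiNumber (σ i) (Nat.card N)) (hND : ¬N ≤ D) :
    IsPiNumber (σ i) D.index := by
  have hne : Nat.card (N.map (QuotientGroup.mk' D)) ≠ 1 := by
    rwa [Ne, card_eq_one, Subgroup.map_eq_bot_iff, QuotientGroup.ker_mk']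
  obtain ⟨p, hp, hpN⟩ := Nat.exists_prime_and_dvd hne
  exact hσ.isPiNumber_of_prime_dvd hD hp (index_eq_card D ▸ hpN.trans (card_subgroup_dvd_card _))
    (hNπ p hp (hpN.trans (card_map_dvd _ _)))

variable [Finite G]

theorem eq_bot_of_isSigmaPrimaryNat_of_oPi_eq_bot (hσ : IsPrimePartition σ) {M N : Subgroup G}
    (hM : IsSigmaPrimaryNat σ M.normalCore.index)
    (hMN : M ≤ normalizer (N : Set G)) (hNπ : IsPiNumber (σ i) (Nat.card N))
    (hO : OPi (σ i) G = ⊥) : N = ⊥ := by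
  set D := M.normalCore
  have hDN : D ≤ normalizer (N : Set G) := (normalCore_le M).trans hMN
  have hND : N ⊓ D = ⊥ := le_bot_iff.mp <| hO ▸ le_oPi_of_le_normalizer (σ i) inf_le_right
    ((le_inf hDN le_normalizer).trans inf_normalizer_le_normalizer_inf)
    (hNπ.of_dvd (card_dvd_of_le inf_le_left))
  by_cases hNDle : N ≤ D
  · rwa [inf_eq_left.mpr hNDle] at hND
  -- `N` maps nontrivially into the `σ`-primary group `G ⧸ D`, so that is a `σ i`-group
  exact eq_bot_of_le_centralizer (σ i) (isPiNumber_index_of_not_le hσ hM hNπ hNDle) hO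
    (le_centralizer_of_inf_eq_bot hDN (by simp [normalizer_eq_top]) hND) hNπ

theorem le_oPi_of_isSigmaPrimaryNat (hσ : IsPrimePartition σ) {M N : Subgroup G}
    (hM : IsSigmaPrimaryNat σ M.normalCore.index)
    (hMN : M ≤ normalizer (N : Set G)) (hNπ : IsPiNumber (σ i) (Nat.card N)) :
    N ≤ OPi (σ i) G := by
  set φ := QuotientGroup.mk' (OPi (σ i) G)
  have hφ : Function.Surjective φ := QuotientGroup.mk'_surjective _
  have := eq_bot_of_isSigmaPrimaryNat_of_oPi_eq_bot hσ (M := M.map φ) (N := N.map φ)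
    (hM.of_dvd (index_normalCore_map_dvd hφ M))
    ((map_mono hMN).trans (le_normalizer_map φ)) (hNπ.of_dvd (card_map_dvd N φ))
    (oPi_quotient_oPi_eq_bot _)
  rwa [Subgroup.map_eq_bot_iff, QuotientGroup.ker_mk'] at this

theorem map_subtype_oPi_le_of_sigmaSubnormal_step (hσ : IsPrimePartition σ) {H K : Subgroup G}
    (hHK : H ≤ K)
    (hstep : (H.subgroupOf K).Normal ∨
      IsSigmaPrimaryNat σ (H.subgroupOf K).normalCore.index) :
    (OPi (σ i) H).map H.subtype ≤ (OPi (σ i) K).map K.subtype := by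
  set L := (OPi (σ i) H).map H.subtype
  have hLH : L ≤ H := map_subtype_le _
  have hLK : L ≤ K := hLH.trans hHK
  have hLπ : IsPiNumber (σ i) (Nat.card (L.subgroupOf K)) :=
    ((isPiNumber_card_oPi (σ i)).of_dvd (card_map_dvd _ _)).of_dvd
      (card_comap_dvd_of_injective L K.subtype K.subtype_injective)
  have hHL : H.subgroupOf K ≤ normalizer (L.subgroupOf K : Set K) :=
    subgroupOf_normalizer_eq hLK ▸ comap_mono (le_normalizer_map_subtype (OPi (σ i) H))
  have hle : L.subgroupOf K ≤ OPi (σ i) K := by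
    rcases hstep with hnormal | hprimary
    · have := hnormal
      exact le_oPi_of_le_normalizer (σ i) (D := H.subgroupOf K) (comap_mono hLH) hHL hLπ
    · exact le_oPi_of_isSigmaPrimaryNat hσ hprimary hHL hLπ
  calc L = (L.subgroupOf K).map K.subtype := by rw [subgroupOf_map_subtype, inf_eq_left.mpr hLK]
    _ ≤ _ := map_mono hle

theorem le_oPi_of_sigmaSubnormal (hσ : IsPrimePartition σ) {K N : Subgroup G}
    (hK : SigmaSubnormal σ K) (hNK : N ≤ K) (hKN : K ≤ normalizer (N : Set G))
    (hNπ : IsPiNumber (σ i) (Nat.card N)) :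
    N ≤ OPi (σ i) G := by
  obtain ⟨t, f, hf0, hftop, hstep⟩ := hK
  have hchain : ∀ j, N ≤ (OPi (σ i) (f j)).map (f j).subtype :=
    Fin.induction (hf0 ▸ le_map_subtype_oPi (σ i) hNK hKN hNπ) fun j hj =>
      hj.trans (map_subtype_oPi_le_of_sigmaSubnormal_step hσ (hstep j).1 (hstep j).2)
  have : (f (Fin.last t)).Normal := hftop ▸ inferInstance
  exact (hchain (Fin.last t)).trans (map_subtype_oPi_le_oPi (σ i) _)

end SigmaSubnormal

theorem sigmaNilpotent_of_isSigmaPrimary {ι : Type*} {σ : ι → Set ℕ} {G : Type*} [Group G]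
    (h : IsSigmaPrimary σ G) : SigmaNilpotent σ G := by
  refine ⟨1, fun _ => ⊤, fun _ => inferInstance, fun _ => ?_, fun t => ?_, iSup_const⟩
  · rwa [IsSigmaPrimary, card_top]
  · exact disjoint_bot_right.mono_right
      (iSup₂_le fun s hs => absurd (Subsingleton.elim s t) hs)

theorem oPi_le_sigmaFitting {ι : Type*} (σ : ι → Set ℕ) (i : ι) (G : Type*) [Group G]
    [Finite G] : OPi (σ i) G ≤ sigmaFitting σ G :=
  le_iSup₂_of_le (OPi (σ i) G)
    ⟨inferInstance, sigmaNilpotent_of_isSigmaPrimary ⟨i, isPiNumber_card_oPi (σ i)⟩⟩ le_rfl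

/-- If `A` is a `σ`-subnormal subgroup of a finite group `G` and `A` is a
`σ i`-group, then `A ≤ O_{σ i}(G)`; consequently, if `A` is `σ`-nilpotent then
`A ≤ F_σ(G)`. -/
theorem sigmaSubnormal_le_oPi_and_fitting {ι : Type*} (σ : ι → Set ℕ)
    (hσ : IsPrimePartition σ) (G : Type*) [Group G] [Finite G]
    (A : Subgroup G) (hA : SigmaSubnormal σ A) :
    (∀ i : ι, (∀ p : ℕ, Nat.Prime p → p ∣ Nat.card ↥A → p ∈ σ i) → A ≤ OPi (σ i) G) ∧
    (SigmaNilpotent σ ↥A → A ≤ sigmaFitting σ G) := by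
  refine ⟨fun i hi => le_oPi_of_sigmaSubnormal hσ hA le_rfl le_normalizer hi, ?_⟩
  rintro ⟨k, N, hN, hNσ, -, hNtop⟩
  have hA_eq : A = ⨆ s, (N s).map A.subtype := by
    rw [← Subgroup.map_iSup, hNtop, ← MonoidHom.range_eq_map, range_subtype]
  refine hA_eq.trans_le (iSup_le fun s => ?_)
  obtain ⟨i, hi⟩ := hNσ s
  have := hN s
  exact (le_oPi_of_sigmaSubnormal hσ hA (map_subtype_le _) (le_normalizer_map_subtype (N s))
    (IsPiNumber.of_dvd hi (card_map_dvd _ _))).trans (oPi_le_sigmaFitting σ i G)
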